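/- arXiv:0901.4481 — 4 statements merged into one kernel-verified Lean document; each statement's English description precedes it below -/
import Mathlib

section
/- There is no Lie algebra monomorphism from sl(2,ℂ) into gl(3,ℂ) ⋉ ℂ³ (the Lie algebra of the complex affine group of ℂ³) whose image intersects the isotropy subalgebra gl(3,ℂ) trivially. -/
open Matrix

/-- The affine Lie algebra bracket on `gl(n,ℂ) ⋉ ℂⁿ`:
`[(A,v),(B,w)] = (AB − BA, Aw − Bv)`. -/
noncomputable def affBracket {n : ℕ} (p q : Matrix (Fin n) (Fin n) ℂ × (Fin n → ℂ)) :
    Matrix (Fin n) (Fin n) ℂ × (Fin n → ℂ) :=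
  (p.1 * q.1 - q.1 * p.1, p.1 *ᵥ q.2 - q.1 *ᵥ p.2)

/-!
Write the embedding as `x ↦ (ρ x, D x)`. Then `ρ` makes `ℂ³` an `sl₂`-module and `D` is a
bijective Lie derivation (1-cocycle) `sl₂ → ℂ³`. Let `Ω = 2(ef + fe) + h²` be the Casimir operator
of `ℂ³`; it commutes with the action and `Ω (D x) = ⁅x, u⁆` for a fixed vector `u`.

If `Ω` is invertible, `D` is inner: `D x = ⁅x, v⁆` with `v = Ω⁻¹ u`. For `x₀ = D⁻¹ v` the cocycle
identity gives `D ∘ ad x₀ = (ρ x₀ - 1) ∘ D`, and since `sl₂` is perfect both `ad x₀` and `ρ x₀` are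
traceless, so `0 = -3`.

If `Ω` is singular, so is the Casimir of the dual module. A primitive vector in its kernel has
weight `n ∈ ℕ` with `n (n + 2) = 0`, so it is a nonzero invariant functional `φ`. Then `φ` kills
every `⁅x, D y⁆ - ⁅y, D x⁆ = D ⁅x, y⁆`, hence all of `D sl₂ = ℂ³`.
-/

open LieModule Module

variable {K L M : Type*} [Field K] [LieRing L] [LieAlgebra K L]
  [AddCommGroup M] [Module K M] [LieRingModule L M] [LieModule K L M]

namespace LieDerivation

theorem dual_eq_zero_of_surjective (hL : lowerCentralSeries K L L 1 = ⊤)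
    {D : LieDerivation K L M} (hD : Function.Surjective D) {φ : Dual K M}
    (hφ : ∀ x : L, ⁅x, φ⁆ = 0) : φ = 0 := by
  have hφD : ∀ x : L, φ (D x) = 0 := by
    intro x
    have hx : x ∈ lowerCentralSeries K L L 1 := hL ▸ LieSubmodule.mem_top x
    rw [lowerCentralSeries_succ, ← LieSubmodule.mem_toSubmodule,
      LieSubmodule.lieIdeal_oper_eq_linear_span'] at hx
    refine Submodule.span_le (p := LinearMap.ker (φ ∘ₗ (D : L →ₗ[K] M))) |>.mpr ?_ hx
    rintro _ ⟨y, -, z, -, rfl⟩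
    have hy : φ ⁅y, D z⁆ = 0 := by simpa using LinearMap.congr_fun (hφ y) (D z)
    have hz : φ ⁅z, D y⁆ = 0 := by simpa using LinearMap.congr_fun (hφ z) (D y)
    simp [apply_lie_eq_sub, hy, hz]
  ext m
  obtain ⟨x, rfl⟩ := hD m
  exact hφD x

theorem natCast_finrank_eq_zero_of_bijective [FiniteDimensional K M]
    (hL : lowerCentralSeries K L L 1 = ⊤) {D : LieDerivation K L M}
    (hD : Function.Bijective D) {v : M} (hv : ∀ x, D x = ⁅x, v⁆) : (finrank K M : K) = 0 := by
  let e := LinearEquiv.ofBijective (D : L →ₗ[K] M) hD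
  have : FiniteDimensional K L := e.symm.finiteDimensional
  set x₀ := e.symm v
  have hx₀ : D x₀ = v := e.apply_symm_apply v
  have hconj : e.conj (toEnd K L L x₀) = toEnd K L M x₀ - 1 := by
    ext m
    obtain ⟨y, rfl⟩ := e.surjective m
    change e ⁅x₀, e.symm (e y)⁆ = ⁅x₀, e y⁆ - e y
    rw [e.symm_apply_apply]
    change D ⁅x₀, y⁆ = ⁅x₀, D y⁆ - D y
    rw [apply_lie_eq_sub, hx₀, ← hv]
  have htrace := congrArg (LinearMap.trace K M) hconj
  have hx₀L : x₀ ∈ lowerCentralSeries K L L 1 := hL ▸ LieSubmodule.mem_top x₀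
  rwa [LinearMap.trace_conj', map_sub, LinearMap.trace_one,
    trace_toEnd_eq_zero_of_mem_lcs K L L le_rfl hx₀L,
    trace_toEnd_eq_zero_of_mem_lcs K L M le_rfl hx₀L, zero_sub, zero_eq_neg] at htrace

end LieDerivation

variable (K M) in
def sl2Casimir (h e f : L) : Module.End K M :=
  (2 : K) • (toEnd K L M e * toEnd K L M f + toEnd K L M f * toEnd K L M e) +
    toEnd K L M h * toEnd K L M h

theorem sl2Casimir_apply (h e f : L) (m : M) :
    sl2Casimir K M h e f m = (2 : K) • (⁅e, ⁅f, m⁆⁆ + ⁅f, ⁅e, m⁆⁆) + ⁅h, ⁅h, m⁆⁆ := rfl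

theorem sl2Casimir_dual (h e f : L) :
    sl2Casimir K (Dual K M) h e f = (sl2Casimir K M h e f).dualMap := by
  ext φ m
  simp [sl2Casimir_apply]
  ring

namespace IsSl2Triple

variable {h e f : L} (t : IsSl2Triple h e f)
include t

theorem lie_f_lie_e (m : M) : ⁅f, ⁅e, m⁆⁆ = ⁅e, ⁅f, m⁆⁆ - ⁅h, m⁆ := by
  rw [leibniz_lie e f m, t.lie_e_f]; abel

theorem lie_h_lie_e (m : M) : ⁅h, ⁅e, m⁆⁆ = ⁅e, ⁅h, m⁆⁆ + 2 • ⁅e, m⁆ := by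
  rw [leibniz_lie h e m, t.lie_h_e_nsmul, nsmul_lie]; abel

theorem lie_h_lie_f (m : M) : ⁅h, ⁅f, m⁆⁆ = ⁅f, ⁅h, m⁆⁆ - 2 • ⁅f, m⁆ := by
  rw [leibniz_lie h f m, t.lie_h_f_nsmul, neg_lie, nsmul_lie]; abel

theorem span_eq_top (hL : t.toLieSubalgebra K = ⊤) : Submodule.span K {e, f, h} = ⊤ :=
  congrArg LieSubalgebra.toSubmodule hL

theorem linearMap_ext (hL : t.toLieSubalgebra K = ⊤) {N : Type*} [AddCommGroup N] [Module K N]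
    {g₁ g₂ : L →ₗ[K] N} (hh : g₁ h = g₂ h) (he : g₁ e = g₂ e) (hf : g₁ f = g₂ f) : g₁ = g₂ :=
  LinearMap.ext_on (t.span_eq_top hL) (by rintro x (rfl | rfl | rfl) <;> assumption)

theorem lowerCentralSeries_one_eq_top [NeZero (2 : K)] (hL : t.toLieSubalgebra K = ⊤) :
    lowerCentralSeries K L L 1 = ⊤ := by
  have hmem : ∀ x y : L, ⁅x, y⁆ ∈ lowerCentralSeries K L L 1 := fun x y =>
    LieSubmodule.lie_mem_lie (LieSubmodule.mem_top x) (LieSubmodule.mem_top y)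
  rw [eq_top_iff, ← LieSubmodule.toSubmodule_le_toSubmodule, LieSubmodule.top_toSubmodule,
    ← t.span_eq_top hL, Submodule.span_le, Set.insert_subset_iff, Set.insert_subset_iff,
    Set.singleton_subset_iff]
  refine ⟨?_, ?_, ?_⟩
  · have := Submodule.smul_mem _ (2⁻¹ : K) (hmem h e)
    rwa [t.lie_h_e_smul K, inv_smul_smul₀ two_ne_zero] at this
  · have := Submodule.smul_mem _ (-2⁻¹ : K) (hmem h f)
    rwa [t.lie_lie_smul_f K, smul_neg, neg_smul, neg_neg, inv_smul_smul₀ two_ne_zero] at this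
  · exact t.lie_e_f ▸ hmem e f

theorem sl2Casimir_lie (hL : t.toLieSubalgebra K = ⊤) (x : L) (m : M) :
    sl2Casimir K M h e f ⁅x, m⁆ = ⁅x, sl2Casimir K M h e f m⁆ := by
  have hcomm : sl2Casimir K M h e f ∘ₗ (LieDerivation.inner K L M m : L →ₗ[K] M) =
      LieDerivation.inner K L M (sl2Casimir K M h e f m) := by
    -- both sides are rewritten into PBW order: `e` before `f` before `h`
    refine t.linearMap_ext hL ?_ ?_ ?_ <;>
    · simp only [LinearMap.comp_apply, LieDerivation.coeFn_coe,
        LieDerivation.inner_apply_apply, sl2Casimir_apply, lie_add, lie_sub, lie_smul, lie_nsmul,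
        t.lie_f_lie_e, t.lie_h_lie_e, t.lie_h_lie_f]
      module
  exact LinearMap.congr_fun hcomm x

theorem sl2Casimir_comp_lieDerivation (hL : t.toLieSubalgebra K = ⊤) (D : LieDerivation K L M) :
    sl2Casimir K M h e f ∘ₗ (D : L →ₗ[K] M) =
      LieDerivation.inner K L M ((2 : K) • (⁅e, D f⁆ + ⁅f, D e⁆) + ⁅h, D h⁆) := by
  have hfe : ⁅f, D e⁆ = ⁅e, D f⁆ - D h := by
    rw [← t.lie_e_f, LieDerivation.apply_lie_eq_sub]; abel
  have hhe : ⁅h, D e⁆ = ⁅e, D h⁆ + (2 : K) • D e := by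
    rw [← map_smul, ← t.lie_h_e_smul K, LieDerivation.apply_lie_eq_sub]; abel
  have hhf : ⁅h, D f⁆ = ⁅f, D h⁆ - (2 : K) • D f := by
    rw [← map_smul, ← neg_neg ((2 : K) • f), ← t.lie_lie_smul_f K, map_neg,
      LieDerivation.apply_lie_eq_sub]; abel
  refine t.linearMap_ext hL ?_ ?_ ?_ <;>
  · simp only [LinearMap.comp_apply, LieDerivation.coeFn_coe, LieDerivation.inner_apply_apply,
      sl2Casimir_apply, lie_add, lie_sub, lie_smul, t.lie_f_lie_e, t.lie_h_lie_e, t.lie_h_lie_f,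
      hfe, hhe, hhf]
    module

theorem sl2Casimir_apply_of_hasPrimitiveVectorWith {m : M} {μ : K}
    (P : t.HasPrimitiveVectorWith m μ) : sl2Casimir K M h e f m = (μ * (μ + 2)) • m := by
  have hef : ⁅e, ⁅f, m⁆⁆ = μ • m := by
    have := t.lie_f_lie_e m
    rwa [P.lie_e, lie_zero, P.lie_h, eq_comm, sub_eq_zero] at this
  rw [sl2Casimir_apply, hef, P.lie_e, lie_zero, P.lie_h, lie_smul, P.lie_h]
  module

theorem exists_ne_zero_forall_lie_eq_zero [CharZero K] [IsAlgClosed K] [FiniteDimensional K M]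
    (hL : t.toLieSubalgebra K = ⊤) (hΩ : ¬ Function.Injective (sl2Casimir K M h e f)) :
    ∃ m : M, m ≠ 0 ∧ ∀ x : L, ⁅x, m⁆ = 0 := by
  let N : LieSubmodule K L M :=
    { LinearMap.ker (sl2Casimir K M h e f) with
      lie_mem := fun {x m} (hm : sl2Casimir K M h e f m = 0) =>
        show sl2Casimir K M h e f ⁅x, m⁆ = 0 by rw [t.sl2Casimir_lie hL, hm, lie_zero] }
  have : Nontrivial N := by
    rw [← LinearMap.ker_eq_bot] at hΩ
    exact Submodule.nontrivial_iff_ne_bot.mpr hΩ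
  obtain ⟨μ, m, hm, P⟩ := t.exists_hasPrimitiveVectorWith (R := K) (M := N)
  obtain ⟨n, rfl⟩ := P.exists_nat
  have P' : t.HasPrimitiveVectorWith (m : M) (n : K) :=
    ⟨fun h0 => hm (Subtype.ext h0), by rw [← LieSubmodule.coe_bracket, P.lie_h]; rfl,
      by rw [← LieSubmodule.coe_bracket, P.lie_e]; rfl⟩
  have hn : n = 0 := by
    have hΩm : sl2Casimir K M h e f (m : M) = 0 := m.2
    rw [t.sl2Casimir_apply_of_hasPrimitiveVectorWith P', smul_eq_zero] at hΩm
    have : (n : K) * (n + 2) = 0 := hΩm.resolve_right P'.ne_zero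
    norm_cast at this
    simpa using this
  subst hn
  have hinner : (LieDerivation.inner K L M (m : M) : L →ₗ[K] M) = 0 := by
    refine t.linearMap_ext hL ?_ P'.lie_e ?_
    · simpa using P'.lie_h
    · simpa using P'.pow_toEnd_f_eq_zero_of_eq_nat (n := 0) (by simp)
  exact ⟨m, P'.ne_zero, fun x => LinearMap.congr_fun hinner x⟩

theorem exists_eq_lie_of_bijective_sl2Casimir (hL : t.toLieSubalgebra K = ⊤)
    (D : LieDerivation K L M) (hΩ : Function.Bijective (sl2Casimir K M h e f)) :
    ∃ v : M, ∀ x : L, D x = ⁅x, v⁆ := by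
  obtain ⟨v, hv⟩ := hΩ.2 ((2 : K) • (⁅e, D f⁆ + ⁅f, D e⁆) + ⁅h, D h⁆)
  refine ⟨v, fun x => hΩ.1 ?_⟩
  rw [t.sl2Casimir_lie hL, hv]
  exact LinearMap.congr_fun (t.sl2Casimir_comp_lieDerivation hL D) x

theorem not_bijective_lieDerivation [CharZero K] [IsAlgClosed K] [FiniteDimensional K M]
    (hL : t.toLieSubalgebra K = ⊤) (D : LieDerivation K L M) : ¬ Function.Bijective D := by
  intro hD
  have hperfect := t.lowerCentralSeries_one_eq_top hL
  by_cases hΩ : Function.Surjective (sl2Casimir K M h e f)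
  · obtain ⟨v, hv⟩ := t.exists_eq_lie_of_bijective_sl2Casimir hL D
      ⟨LinearMap.injective_iff_surjective.mpr hΩ, hΩ⟩
    have hM := D.natCast_finrank_eq_zero_of_bijective hperfect hD hv
    rw [Nat.cast_eq_zero, finrank_zero_iff] at hM
    exact t.h_ne_zero (hD.1 (Subsingleton.elim (D h) (D 0)))
  · rw [← LinearMap.dualMap_injective_iff, ← sl2Casimir_dual] at hΩ
    obtain ⟨φ, hφ, hφL⟩ := t.exists_ne_zero_forall_lie_eq_zero hL hΩ
    exact hφ (D.dual_eq_zero_of_surjective hperfect hD.2 hφL)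

end IsSl2Triple

namespace LieAlgebra.SpecialLinear

theorem finrank_sl {n : Type*} [Fintype n] [DecidableEq n] [Nonempty n] :
    finrank K (sl n K) = Fintype.card n ^ 2 - 1 := by
  have hsurj : LinearMap.range (traceLinearMap n K K) = ⊤ := by
    let i := Classical.arbitrary n
    exact LinearMap.range_eq_top.mpr fun r => ⟨Matrix.single i i r, by simp⟩
  have := LinearMap.finrank_range_add_finrank_ker (traceLinearMap n K K)
  rw [hsurj, finrank_top, Module.finrank_self, Module.finrank_matrix, Module.finrank_self] at this
  change finrank K (LinearMap.ker (traceLinearMap n K K)) = _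
  rw [sq]
  omega

variable {R : Type*} [CommRing R]

theorem isSl2Triple_fin_two [Nontrivial R] :
    IsSl2Triple (singleSubSingle (0 : Fin 2) 1 (1 : R)) (single 0 1 (by decide) 1)
      (single 1 0 (by decide) 1) where
  h_ne_zero h0 := by simpa using congrFun (congrFun (congrArg Subtype.val h0) 0) 0
  lie_e_f := by
    ext i j
    fin_cases i <;> fin_cases j <;> norm_num [Ring.lie_def, Matrix.mul_apply]
  lie_h_e_nsmul := by
    ext i j
    fin_cases i <;> fin_cases j <;> norm_num [Ring.lie_def, Matrix.mul_apply]
  lie_h_f_nsmul := by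
    ext i j
    fin_cases i <;> fin_cases j <;> norm_num [Ring.lie_def, Matrix.mul_apply]

theorem toLieSubalgebra_isSl2Triple_fin_two [Nontrivial R] :
    (isSl2Triple_fin_two (R := R)).toLieSubalgebra R = ⊤ := by
  refine eq_top_iff.mpr fun x _ => IsSl2Triple.mem_toLieSubalgebra_iff.mpr
    ⟨x.1 0 1, x.1 1 0, x.1 0 0, ?_⟩
  have htrace : x.1 0 0 + x.1 1 1 = 0 := by
    simpa [Matrix.trace_fin_two] using LinearMap.mem_ker.mp x.2
  ext i j
  fin_cases i <;> fin_cases j <;> simp [Ring.lie_def]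
  linear_combination htrace

end LieAlgebra.SpecialLinear

open LieAlgebra.SpecialLinear in
/-- There is no Lie algebra monomorphism from `sl(2,ℂ)` into `gl(3,ℂ) ⋉ ℂ³`
whose image intersects the isotropy subalgebra `gl(3,ℂ) × {0}` trivially. -/
theorem no_flat_affine_structure_sl2 :
    ¬ ∃ i : (LieAlgebra.SpecialLinear.sl (Fin 2) ℂ) →ₗ[ℂ]
        (Matrix (Fin 3) (Fin 3) ℂ × (Fin 3 → ℂ)),
      Function.Injective i ∧
      (∀ x y, i ⁅x, y⁆ = affBracket (i x) (i y)) ∧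
      (∀ x, (i x).2 = 0 → i x = 0) := by
  rintro ⟨i, hinj, hbr, hiso⟩
  let := LieRing.ofAssociativeRing (A := Matrix (Fin 3) (Fin 3) ℂ)
  let := LieAlgebra.ofAssociativeAlgebra (R := ℂ) (A := Matrix (Fin 3) (Fin 3) ℂ)
  let ρ : sl (Fin 2) ℂ →ₗ⁅ℂ⁆ Matrix (Fin 3) (Fin 3) ℂ :=
    { LinearMap.fst ℂ _ _ ∘ₗ i with map_lie' := congrArg Prod.fst (hbr _ _) }
  let := LieRingModule.compLieHom (Fin 3 → ℂ) ρ
  have := LieModule.compLieHom (Fin 3 → ℂ) ρ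
  let D : LieDerivation ℂ (sl (Fin 2) ℂ) (Fin 3 → ℂ) :=
    { LinearMap.snd ℂ _ _ ∘ₗ i with leibniz' := fun x y => congrArg Prod.snd (hbr x y) }
  have hD : Function.Injective D := by
    rw [← LieDerivation.coeFn_coe, injective_iff_map_eq_zero]
    exact fun x hx => hinj ((hiso x hx).trans (map_zero i).symm)
  have hdim : Module.finrank ℂ (sl (Fin 2) ℂ) = Module.finrank ℂ (Fin 3 → ℂ) := by
    simp [finrank_sl]
  exact isSl2Triple_fin_two.not_bijective_lieDerivation toLieSubalgebra_isSl2Triple_fin_two D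
    ⟨hD, (LinearMap.injective_iff_surjective_of_finrank_eq_finrank hdim).mp hD⟩
end

section
/- Every 3-dimensional complex solvable unimodular Lie algebra (i.e. ℂ³, heis, or sol) admits a Lie algebra monomorphism into gl(3,ℂ) ⋉ ℂ³ whose image intersects the isotropy gl(3,ℂ) × {0} trivially. -/
/-!
It suffices to find an abelian subspace `A ⊇ [L, L]` of codimension one. Take a linear form `φ`
with kernel `A` and `b₀` with `φ b₀ = 1`; then `⁅x, y⁆ = φ x • ⁅b₀, y⁆ - φ y • ⁅b₀, x⁆`, so in
coordinates `x ↦ (φ x • ad b₀, x)` is a Lie monomorphism into `gl(n, ℂ) ⋉ ℂⁿ` whose image meets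
`gl(n, ℂ) × {0}` trivially.

Solvability makes `[L, L]` proper. If `[L, L] ⊆ K z` with `z ≠ 0`, the centraliser of `z` has
dimension at least two, and `z` together with any other element of it spans `A`. If `[L, L]` has
dimension two, unimodularity makes it abelian: for a basis `f, g` of it with
`⁅f, g⁆ = α f + β g` one finds `tr (ad f) = β` and `tr (ad g) = -α`.
-/

open Matrix

open Module

theorem LinearMap.trace_eq_sum_repr {R M ι : Type*} [CommRing R] [AddCommGroup M] [Module R M]
    [Fintype ι] [DecidableEq ι] (b : Basis ι R M) (f : M →ₗ[R] M) :
    trace R M f = ∑ i, b.repr (f (b i)) i := by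
  simp [trace_eq_matrix_trace R b, Matrix.trace, toMatrix_apply]

theorem LieIdeal.trace_ad_eq {K L : Type*} [Field K] [LieRing L] [LieAlgebra K L]
    [FiniteDimensional K L] (I : LieIdeal K L) (x : I) :
    LinearMap.trace K I (LieAlgebra.ad K I x) = LinearMap.trace K L (LieAlgebra.ad K L x) :=
  LinearMap.trace_restrict_eq_of_forall_mem I.toSubmodule (LieAlgebra.ad K L x) fun y =>
    lie_mem_left K L I _ y x.2

theorem isLieAbelian_of_finrank_eq_two {K L : Type*} [Field K] [LieRing L] [LieAlgebra K L]
    (hdim : finrank K L = 2) (hunimod : ∀ x : L, LinearMap.trace K L (LieAlgebra.ad K L x) = 0) :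
    IsLieAbelian L := by
  have : FiniteDimensional K L := Module.finite_of_finrank_eq_succ hdim
  let b := finBasisOfFinrankEq K L hdim
  have h₀ := hunimod (b 0)
  have h₁ := hunimod (b 1)
  simp only [LinearMap.trace_eq_sum_repr b, Fin.sum_univ_two, LieAlgebra.ad_apply, lie_self,
    map_zero, Finsupp.zero_apply, zero_add, add_zero] at h₀ h₁
  have hb : ⁅b 0, b 1⁆ = 0 := by
    rw [← lie_skew, map_neg, Finsupp.neg_apply, neg_eq_zero] at h₁
    refine b.repr.injective (Finsupp.ext fun i => ?_)
    fin_cases i <;> simpa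
  have had : (LieAlgebra.ad K L : L →ₗ[K] Module.End K L) = 0 := by
    refine b.ext fun i => b.ext fun j => ?_
    fin_cases i <;> fin_cases j <;> simp [hb, ← lie_skew (b 1)]
  exact ⟨fun x y => by simpa using LinearMap.congr_fun (LinearMap.congr_fun had x) y⟩

theorem exists_ne_zero_le_span_singleton {K V : Type*} [Field K] [AddCommGroup V] [Module K V]
    [Nontrivial V] {W : Submodule K V} [FiniteDimensional K W] (hW : finrank K W ≤ 1) :
    ∃ z : V, z ≠ 0 ∧ W ≤ K ∙ z := by
  rcases eq_or_ne W ⊥ with rfl | hW₀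
  · obtain ⟨z, hz⟩ := exists_ne (0 : V)
    exact ⟨z, hz, bot_le⟩
  · obtain ⟨z, hzW, hz⟩ := Submodule.exists_mem_ne_zero_of_ne_bot hW₀
    refine ⟨z, hz, (Submodule.eq_of_le_of_finrank_le ?_ ?_).ge⟩
    · exact (Submodule.span_singleton_le_iff_mem _ _).mpr hzW
    · rwa [finrank_span_singleton hz]

section Abelian

variable {K L : Type*} [Field K] [LieRing L] [LieAlgebra K L] [FiniteDimensional K L]

theorem exists_abelian_finrank_two_of_lie_mem_span_singleton (hdim : finrank K L = 3) {z : L}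
    (hz : z ≠ 0) (hder : ∀ x y : L, ⁅x, y⁆ ∈ K ∙ z) :
    ∃ A : Submodule K L, finrank K A = 2 ∧ (∀ x y : L, ⁅x, y⁆ ∈ A) ∧
      ∀ a ∈ A, ∀ a' ∈ A, ⁅a, a'⁆ = 0 := by
  have hrange : finrank K (LinearMap.range (LieAlgebra.ad K L z)) ≤ 1 := by
    rw [← finrank_span_singleton (K := K) hz]
    exact Submodule.finrank_mono (LinearMap.range_le_iff_comap.mpr
      (Submodule.eq_top_iff'.mpr fun y => hder z y))
  have hker := LinearMap.finrank_range_add_finrank_ker (LieAlgebra.ad K L z)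
  obtain ⟨w, hw, hwz⟩ := SetLike.exists_of_lt (Submodule.lt_of_le_of_finrank_lt_finrank
    (t := LinearMap.ker (LieAlgebra.ad K L z))
    ((Submodule.span_singleton_le_iff_mem _ _).mpr (lie_self z))
    (by rw [finrank_span_singleton hz]; omega))
  have hzw : ⁅z, w⁆ = 0 := hw
  have hwz' : ⁅w, z⁆ = 0 := by rw [← lie_skew, hzw, neg_zero]
  refine ⟨Submodule.span K {z, w}, ?_, fun x y => Submodule.span_mono (by simp) (hder x y), ?_⟩
  · rw [← Matrix.range_cons_cons_empty z w ![], finrank_span_eq_card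
      ((LinearIndependent.pair_iff' hz).mpr fun a h =>
        hwz (Submodule.mem_span_singleton.mpr ⟨a, h⟩)), Fintype.card_fin]
  · rintro a ha a' ha'
    obtain ⟨s, t, rfl⟩ := Submodule.mem_span_pair.mp ha
    obtain ⟨s', t', rfl⟩ := Submodule.mem_span_pair.mp ha'
    simp [hzw, hwz']

theorem exists_abelian_finrank_two_of_isSolvable [LieAlgebra.IsSolvable L]
    (hdim : finrank K L = 3)
    (hunimod : ∀ x : L, LinearMap.trace K L (LieAlgebra.ad K L x) = 0) :
    ∃ A : Submodule K L, finrank K A = 2 ∧ (∀ x y : L, ⁅x, y⁆ ∈ A) ∧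
      ∀ a ∈ A, ∀ a' ∈ A, ⁅a, a'⁆ = 0 := by
  have : Nontrivial L := Module.nontrivial_of_finrank_pos (R := K) (by omega)
  set D := LieAlgebra.derivedSeries K L 1
  have hmem : ∀ x y : L, ⁅x, y⁆ ∈ D.toSubmodule := fun x y =>
    LieSubmodule.lie_mem_lie (LieSubmodule.mem_top x) (LieSubmodule.mem_top y)
  have hD : finrank K D < 3 := hdim ▸ Submodule.finrank_lt (s := D.toSubmodule) fun h =>
    (LieAlgebra.derivedSeries_lt_top_of_solvable K L).ne ((LieSubmodule.toSubmodule_eq_top _).mp h)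
  rcases (by omega : finrank K D ≤ 1 ∨ finrank K D = 2) with hD₁ | hD₂
  · obtain ⟨z, hz, hDz⟩ := exists_ne_zero_le_span_singleton hD₁
    exact exists_abelian_finrank_two_of_lie_mem_span_singleton hdim hz fun x y => hDz (hmem x y)
  · have := isLieAbelian_of_finrank_eq_two hD₂ fun x => (D.trace_ad_eq x).trans (hunimod x)
    refine ⟨D.toSubmodule, hD₂, hmem, fun a ha a' ha' => ?_⟩
    exact congrArg Subtype.val (trivial_lie_zero D D ⟨a, ha⟩ ⟨a', ha'⟩)

end Abelian

theorem lie_eq_smul_lie_sub_smul_lie {R L : Type*} [CommRing R] [LieRing L] [LieAlgebra R L]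
    {φ : L →ₗ[R] R} {b₀ : L} (hb₀ : φ b₀ = 1)
    (hab : ∀ a a' : L, φ a = 0 → φ a' = 0 → ⁅a, a'⁆ = 0) (x y : L) :
    ⁅x, y⁆ = φ x • ⁅b₀, y⁆ - φ y • ⁅b₀, x⁆ := by
  have h := hab (x - φ x • b₀) (y - φ y • b₀) (by simp [hb₀]) (by simp [hb₀])
  simp only [sub_lie, lie_sub, smul_lie, lie_smul, lie_self, smul_zero, sub_zero] at h
  linear_combination (norm := module) h - φ y • lie_skew b₀ x

theorem exists_ker_eq_of_finrank_add_one_eq {K V : Type*} [Field K] [AddCommGroup V]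
    [Module K V] [FiniteDimensional K V] {A : Submodule K V}
    (hA : finrank K A + 1 = finrank K V) :
    ∃ (φ : V →ₗ[K] K) (b₀ : V), φ b₀ = 1 ∧ LinearMap.ker φ = A := by
  obtain ⟨x, -, hx⟩ := SetLike.exists_of_lt (Submodule.lt_top_of_finrank_lt_finrank (s := A)
    (by omega))
  obtain ⟨f, hfx, hf⟩ := A.exists_dual_map_eq_bot_of_notMem hx inferInstance
  have hker : LinearMap.ker f ≠ ⊤ := fun h =>
    hfx (LinearMap.mem_ker.mp (h ▸ Submodule.mem_top))
  refine ⟨(f x)⁻¹ • f, x, inv_mul_cancel₀ hfx, ?_⟩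
  rw [LinearMap.ker_smul _ _ (inv_ne_zero hfx)]
  refine (Submodule.eq_of_le_of_finrank_le (LinearMap.le_ker_iff_map.mpr hf) ?_).symm
  have := Submodule.finrank_lt hker
  omega

section AffineEmbedding

variable {n : ℕ} {L : Type*} [LieRing L] [LieAlgebra ℂ L]

noncomputable def affineEmbedding (e : L ≃ₗ[ℂ] (Fin n → ℂ)) (φ : L →ₗ[ℂ] ℂ) (b₀ : L) :
    L →ₗ[ℂ] Matrix (Fin n) (Fin n) ℂ × (Fin n → ℂ) :=
  (φ.smulRight (LinearMap.toMatrix'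
    (e.toLinearMap ∘ₗ LieAlgebra.ad ℂ L b₀ ∘ₗ e.symm.toLinearMap))).prod e.toLinearMap

variable (e : L ≃ₗ[ℂ] (Fin n → ℂ)) (φ : L →ₗ[ℂ] ℂ) (b₀ : L)

theorem affineEmbedding_snd (x : L) : (affineEmbedding e φ b₀ x).2 = e x := rfl

theorem affineEmbedding_injective : Function.Injective (affineEmbedding e φ b₀) :=
  fun _ _ h => e.injective (congrArg Prod.snd h)

theorem affineEmbedding_eq_zero_of_snd_eq_zero {x : L}
    (hx : (affineEmbedding e φ b₀ x).2 = 0) : affineEmbedding e φ b₀ x = 0 := by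
  rw [affineEmbedding_snd, e.map_eq_zero_iff] at hx
  rw [hx, map_zero]

theorem affineEmbedding_lie (hb₀ : φ b₀ = 1) (hder : ∀ x y : L, φ ⁅x, y⁆ = 0)
    (hab : ∀ a a' : L, φ a = 0 → φ a' = 0 → ⁅a, a'⁆ = 0) (x y : L) :
    affineEmbedding e φ b₀ ⁅x, y⁆ =
      affBracket (affineEmbedding e φ b₀ x) (affineEmbedding e φ b₀ y) := by
  refine Prod.ext ?_ ?_
  · simp [affineEmbedding, affBracket, hder, smul_comm (φ x)]
  · simp [affineEmbedding, affBracket, lie_eq_smul_lie_sub_smul_lie hb₀ hab x y,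
      Matrix.smul_mulVec]

end AffineEmbedding

theorem exists_affine_embedding {L : Type*} [LieRing L]
    [LieAlgebra ℂ L] [FiniteDimensional ℂ L] {n : ℕ} (hdim : finrank ℂ L = n)
    {A : Submodule ℂ L} (hA : finrank ℂ A + 1 = n) (hder : ∀ x y : L, ⁅x, y⁆ ∈ A)
    (hab : ∀ a ∈ A, ∀ a' ∈ A, ⁅a, a'⁆ = 0) :
    ∃ i : L →ₗ[ℂ] Matrix (Fin n) (Fin n) ℂ × (Fin n → ℂ),
      Function.Injective i ∧ (∀ x y, i ⁅x, y⁆ = affBracket (i x) (i y)) ∧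
      (∀ x, (i x).2 = 0 → i x = 0) := by
  obtain ⟨φ, b₀, hb₀, hker⟩ := exists_ker_eq_of_finrank_add_one_eq (hA.trans hdim.symm)
  have hφ : ∀ x, φ x = 0 ↔ x ∈ A := fun x => by rw [← hker, LinearMap.mem_ker]
  let e := (finBasisOfFinrankEq ℂ L hdim).equivFun
  refine ⟨affineEmbedding e φ b₀, affineEmbedding_injective e φ b₀, ?_,
    fun x => affineEmbedding_eq_zero_of_snd_eq_zero e φ b₀⟩
  exact affineEmbedding_lie e φ b₀ hb₀ (fun x y => (hφ _).mpr (hder x y))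
    fun a a' ha ha' => hab a ((hφ a).mp ha) a' ((hφ a').mp ha')

/-- Every 3-dimensional complex solvable unimodular Lie algebra admits a Lie
algebra monomorphism into `gl(3,ℂ) ⋉ ℂ³` whose image intersects the isotropy
`gl(3,ℂ) × {0}` trivially. -/
theorem solvable_unimodular_dim3_embeds_affine {L : Type*} [LieRing L]
    [LieAlgebra ℂ L] [FiniteDimensional ℂ L]
    (hdim : Module.finrank ℂ L = 3)
    (hsolv : LieAlgebra.IsSolvable L)
    (hunimod : ∀ x : L, LinearMap.trace ℂ L (LieAlgebra.ad ℂ L x) = 0) :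
    ∃ i : L →ₗ[ℂ] Matrix (Fin 3) (Fin 3) ℂ × (Fin 3 → ℂ),
      Function.Injective i ∧
      (∀ x y, i ⁅x, y⁆ = affBracket (i x) (i y)) ∧
      (∀ x, (i x).2 = 0 → i x = 0) := by
  obtain ⟨A, hA, hder, hab⟩ := exists_abelian_finrank_two_of_isSolvable hdim hunimod
  exact exists_affine_embedding hdim (by rw [hA]) hder hab
end

section
/- If i : 𝔤 → gl(n,ℂ) ⋉ ℂⁿ is a Lie algebra homomorphism and 𝔤 has no nonzero abelian ideal, then p₁ ∘ i is injective if and only if i is injective. -/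
open Matrix

section AffineLieAlgebra

attribute [local instance] LieRing.ofAssociativeRing

variable {n : ℕ}

theorem affBracket_fst (p q : Matrix (Fin n) (Fin n) ℂ × (Fin n → ℂ)) :
    (affBracket p q).1 = ⁅p.1, q.1⁆ :=
  (Ring.lie_def _ _).symm

theorem affBracket_eq_zero_of_fst_eq_zero {p q : Matrix (Fin n) (Fin n) ℂ × (Fin n → ℂ)}
    (hp : p.1 = 0) (hq : q.1 = 0) : affBracket p q = 0 := by
  simp [affBracket, hp, hq]

variable {L : Type*} [LieRing L] [LieAlgebra ℂ L]
  (i : L →ₗ[ℂ] Matrix (Fin n) (Fin n) ℂ × (Fin n → ℂ))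

noncomputable def affFstLieHom (hbr : ∀ x y, i ⁅x, y⁆ = affBracket (i x) (i y)) :
    L →ₗ⁅ℂ⁆ Matrix (Fin n) (Fin n) ℂ :=
  { (LinearMap.fst ℂ _ _).comp i with
    map_lie' := fun {x y} => by simp [hbr, affBracket_fst] }

/-- `i` maps the kernel of `p₁ ∘ i` into `{0} ⋉ ℂⁿ`, on which the bracket vanishes. -/
theorem isLieAbelian_ker_affFstLieHom (hbr : ∀ x y, i ⁅x, y⁆ = affBracket (i x) (i y))
    (hi : Function.Injective i) :
    IsLieAbelian (affFstLieHom i hbr).ker where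
  trivial a b := by
    have ha : (i a).1 = 0 := (affFstLieHom i hbr).mem_ker.mp a.2
    have hb : (i b).1 = 0 := (affFstLieHom i hbr).mem_ker.mp b.2
    refine Subtype.ext (hi ?_)
    change i ⁅(a : L), (b : L)⁆ = i 0
    rw [hbr, affBracket_eq_zero_of_fst_eq_zero ha hb, map_zero]

theorem injective_fst_comp_of_injective (hbr : ∀ x y, i ⁅x, y⁆ = affBracket (i x) (i y))
    (habel : ∀ I : LieIdeal ℂ L, IsLieAbelian I → I = ⊥) (hi : Function.Injective i) :
    Function.Injective (fun x => (i x).1) :=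
  (affFstLieHom i hbr).ker_eq_bot.mp (habel _ (isLieAbelian_ker_affFstLieHom i hbr hi))

end AffineLieAlgebra

/-- If `i : 𝔤 → gl(n,ℂ) ⋉ ℂⁿ` is a Lie algebra homomorphism and `𝔤` has no
nonzero abelian ideal, then `p₁ ∘ i` is injective if and only if `i` is
injective, where `p₁ : (A,v) ↦ A` is the projection onto `gl(n,ℂ)`. -/
theorem proj_injective_iff_injective {L : Type*} [LieRing L] [LieAlgebra ℂ L]
    (habel : ∀ I : LieIdeal ℂ L, IsLieAbelian I → I = ⊥) {n : ℕ}
    (i : L →ₗ[ℂ] Matrix (Fin n) (Fin n) ℂ × (Fin n → ℂ))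
    (hbr : ∀ x y, i ⁅x, y⁆ = affBracket (i x) (i y)) :
    Function.Injective (fun x => (i x).1) ↔ Function.Injective i :=
  ⟨fun h => Function.Injective.of_comp (f := Prod.fst) h,
    injective_fst_comp_of_injective i hbr habel⟩
end

section
/- Every complex unimodular Lie algebra of dimension 3 that is solvable is isomorphic to ℂ³, to the Heisenberg algebra heis, or to the algebra sol. -/
/-!
Let `D = [L, L]`. As `ad x` maps `L` into `D`, `tr (ad x) = tr (ad x|_D)`, so `D` is again
unimodular, and `dim D < 3` by solvability. If `dim D = 1`, each `ad x|_D` is a traceless scalar,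
so `D` is central and `L ≅ heis`. If `dim D = 2`, then `D`, being a unimodular Lie algebra of
dimension 2, is abelian; for `x ∉ D` this makes `ad x|_D` map onto `[L, L] = D`, so it is
invertible and traceless, hence has the distinct eigenvalues `±μ`, `μ ≠ 0`, and rescaling `x`
gives `L ≅ sol`.
-/

open Module LieAlgebra

theorem Module.End.exists_hasEigenvector_neg_of_trace_eq_zero
    {K V : Type*} [Field K] [IsAlgClosed K] [NeZero (2 : K)] [AddCommGroup V] [Module K V]
    [FiniteDimensional K V] (hV : finrank K V = 2) {f : End K V}
    (htr : LinearMap.trace K V f = 0) (hf : Function.Injective f) :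
    ∃ μ ≠ 0, ∃ v w, f.HasEigenvector μ v ∧ f.HasEigenvector (-μ) w ∧
      LinearIndependent K ![v, w] := by
  have hsplit := IsAlgClosed.splits f.charpoly
  obtain ⟨μ, ν, hroots⟩ : ∃ μ ν, f.charpoly.roots = {μ, ν} := by
    rw [← Multiset.card_eq_two, Polynomial.splits_iff_card_roots.mp hsplit,
      f.charpoly_natDegree, hV]
  have hν : ν = -μ := by
    have hsum := f.trace_eq_sum_roots_charpoly_of_splits hsplit
    rw [htr, hroots] at hsum
    simp only [Multiset.insert_eq_cons, Multiset.sum_cons, Multiset.sum_singleton] at hsum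
    linear_combination -hsum
  have hasEigenvalue (c : K) (hc : c ∈ f.charpoly.roots) : f.HasEigenvalue c :=
    (f.hasEigenvalue_iff_isRoot_charpoly c).mpr (Polynomial.isRoot_of_mem_roots hc)
  obtain ⟨v, hv⟩ := (hasEigenvalue μ (by simp [hroots])).exists_hasEigenvector
  obtain ⟨w, hw⟩ := (hasEigenvalue ν (by simp [hroots])).exists_hasEigenvector
  subst hν
  have hμ : μ ≠ 0 := by
    rintro rfl
    exact hv.2 (hf (by simp [hv.apply_eq_smul]))
  have hμ_ne_neg : μ ≠ -μ := fun h ↦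
    hμ ((mul_eq_zero.mp (by linear_combination h : (2 : K) * μ = 0)).resolve_left two_ne_zero)
  exact ⟨μ, hμ, v, w, hv, hw, f.eigenvectors_linearIndependent' ![μ, -μ]
    (injective_pair_iff_ne.mpr hμ_ne_neg) ![v, w] (Fin.forall_fin_two.mpr ⟨hv, hw⟩)⟩

namespace LieAlgebra

variable (K L : Type*) [Field K] [LieRing L] [LieAlgebra K L]

def IsUnimodular : Prop := ∀ x : L, LinearMap.trace K L (ad K L x) = 0

variable {K L}

lemma lie_mem_derivedSeries_one (x y : L) : ⁅x, y⁆ ∈ derivedSeries K L 1 :=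
  LieSubmodule.lie_mem_lie (LieSubmodule.mem_top x) (LieSubmodule.mem_top y)

lemma finrank_derivedSeries_one_eq_zero_iff [FiniteDimensional K L] :
    finrank K (derivedSeries K L 1) = 0 ↔ ∀ x y : L, ⁅x, y⁆ = 0 := by
  refine (Submodule.finrank_eq_zero (S := (derivedSeries K L 1).toSubmodule)).trans ?_
  rw [LieSubmodule.toSubmodule_eq_bot]
  exact (LieSubmodule.lie_eq_bot_iff ⊤ ⊤).trans (by simp)

lemma trace_toEnd_derivedSeries_one [FiniteDimensional K L] (x : L) :
    LinearMap.trace K (derivedSeries K L 1) (LieModule.toEnd K L (derivedSeries K L 1) x) =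
      LinearMap.trace K L (ad K L x) :=
  LinearMap.trace_restrict_eq_of_forall_mem (derivedSeries K L 1).toSubmodule (ad K L x)
    (lie_mem_derivedSeries_one x)

lemma IsUnimodular.trace_toEnd_derivedSeries_one [FiniteDimensional K L]
    (hL : IsUnimodular K L) (x : L) :
    LinearMap.trace K (derivedSeries K L 1) (LieModule.toEnd K L (derivedSeries K L 1) x) = 0 :=
  (LieAlgebra.trace_toEnd_derivedSeries_one x).trans (hL x)

lemma IsUnimodular.derivedSeries_one [FiniteDimensional K L] (hL : IsUnimodular K L) :
    IsUnimodular K (derivedSeries K L 1) :=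
  fun u ↦ hL.trace_toEnd_derivedSeries_one u

lemma IsUnimodular.isLieAbelian_of_finrank_eq_two (hL : IsUnimodular K L)
    (h2 : finrank K L = 2) : IsLieAbelian L := by
  have : FiniteDimensional K L := .of_finrank_eq_succ h2
  let b := finBasisOfFinrankEq K L h2
  -- The traces of `ad (b 0)` and `ad (b 1)` are the two coordinates of `⁅b 0, b 1⁆`, up to sign.
  have h0 := hL (b 0)
  have h1 := hL (b 1)
  rw [LinearMap.trace_eq_matrix_trace K b, Matrix.trace_fin_two] at h0 h1
  simp only [LinearMap.toMatrix_apply, ad_apply, lie_self, map_zero, Finsupp.zero_apply,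
    zero_add, add_zero] at h0 h1
  have hb : ⁅b 0, b 1⁆ = 0 := by
    refine b.ext_elem fun i ↦ ?_
    rw [← lie_skew, map_neg, Finsupp.neg_apply, neg_eq_zero] at h1
    fin_cases i <;> simpa
  have hbracket : (ad K L : L →ₗ[K] Module.End K L) = 0 :=
    LinearMap.ext_basis b b fun i j ↦ by
      fin_cases i <;> fin_cases j <;> simp [hb, ← lie_skew (b 1)]
  exact ⟨fun x y ↦ by simpa using LinearMap.congr_fun₂ hbracket x y⟩

lemma IsUnimodular.lie_eq_zero_of_finrank_derivedSeries_eq_one [FiniteDimensional K L]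
    (hL : IsUnimodular K L) (hD : finrank K (derivedSeries K L 1) = 1) (x : L) {z : L}
    (hz : z ∈ derivedSeries K L 1) : ⁅x, z⁆ = 0 := by
  obtain ⟨c, hc, -⟩ := LinearMap.existsUnique_eq_smul_id_of_finrank_eq_one hD
    (LieModule.toEnd K L (derivedSeries K L 1) x)
  have hc0 : c = 0 := by
    simpa [hc, hD] using hL.trace_toEnd_derivedSeries_one x
  simpa [hc0] using congr_arg Subtype.val (LinearMap.congr_fun hc ⟨z, hz⟩)

lemma linearIndependent_of_lie_eq_of_lie_eq_zero {e₁ e₂ z : L} (hz : z ≠ 0)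
    (h₁₂ : ⁅e₁, e₂⁆ = z) (h₁ : ⁅e₁, z⁆ = 0) (h₂ : ⁅e₂, z⁆ = 0) :
    LinearIndependent K ![e₁, e₂, z] := by
  rw [Fintype.linearIndependent_iff]
  intro g hg
  simp only [Fin.sum_univ_three, Matrix.cons_val_zero, Matrix.cons_val_one,
    Matrix.cons_val_two, Matrix.head_cons, Matrix.tail_cons] at hg
  have hg₁ : g 1 = 0 := by
    simpa [h₁₂, h₁, hz] using congr_arg (⁅e₁, ·⁆) hg
  have hg₀ : g 0 = 0 := by
    simpa [← lie_skew e₂ e₁, h₁₂, h₂, hz] using congr_arg (⁅e₂, ·⁆) hg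
  have hg₂ : g 2 = 0 := by
    simpa [hg₀, hg₁, hz] using hg
  exact Fin.forall_fin_succ.mpr ⟨hg₀, Fin.forall_fin_two.mpr ⟨hg₁, hg₂⟩⟩

lemma IsUnimodular.exists_heisenberg_triple [FiniteDimensional K L] (hL : IsUnimodular K L)
    (hD : finrank K (derivedSeries K L 1) = 1) :
    ∃ e₁ e₂ z : L, LinearIndependent K ![e₁, e₂, z] ∧
      ⁅e₁, e₂⁆ = z ∧ ⁅e₁, z⁆ = 0 ∧ ⁅e₂, z⁆ = 0 := by
  obtain ⟨e₁, e₂, hz⟩ : ∃ e₁ e₂ : L, ⁅e₁, e₂⁆ ≠ 0 := by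
    simpa using mt (finrank_derivedSeries_one_eq_zero_iff (K := K)).mpr (by omega)
  have hcentral (x : L) : ⁅x, ⁅e₁, e₂⁆⁆ = 0 :=
    hL.lie_eq_zero_of_finrank_derivedSeries_eq_one hD x (lie_mem_derivedSeries_one e₁ e₂)
  exact ⟨e₁, e₂, _, linearIndependent_of_lie_eq_of_lie_eq_zero hz rfl (hcentral e₁) (hcentral e₂),
    rfl, hcentral e₁, hcentral e₂⟩

lemma toEnd_derivedSeries_one_surjective [IsLieAbelian (derivedSeries K L 1)] {x : L}
    (hx : (derivedSeries K L 1).toSubmodule ⊔ Submodule.span K {x} = ⊤) :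
    Function.Surjective (LieModule.toEnd K L (derivedSeries K L 1) x) := by
  set D := derivedSeries K L 1
  have hab {u v : L} (hu : u ∈ D) (hv : v ∈ D) : ⁅u, v⁆ = 0 := by
    simpa using congr_arg Subtype.val (trivial_lie_zero D D ⟨u, hu⟩ ⟨v, hv⟩)
  have hdecomp (y : L) : ∃ (s : K) (u : L), u ∈ D ∧ y = s • x + u := by
    obtain ⟨u, hu, v, hv, rfl⟩ := Submodule.mem_sup.mp (hx ▸ Submodule.mem_top : y ∈ _)
    obtain ⟨s, rfl⟩ := Submodule.mem_span_singleton.mp hv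
    exact ⟨s, u, hu, add_comm _ _⟩
  have hle : D.toSubmodule ≤ D.toSubmodule.map (ad K L x) := by
    refine (coe_derivedSeries_one_eq K L).trans_le (Submodule.span_le.mpr ?_)
    rintro _ ⟨y, z, rfl⟩
    obtain ⟨s, u, hu, rfl⟩ := hdecomp y
    obtain ⟨t, v, hv, rfl⟩ := hdecomp z
    refine ⟨s • v - t • u, D.sub_mem (D.smul_mem s hv) (D.smul_mem t hu), ?_⟩
    simp only [ad_apply, lie_sub, lie_smul, add_lie, lie_add, smul_lie, lie_self, hab hu hv,
      ← lie_skew u x]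
    module
  rintro ⟨d, hd⟩
  obtain ⟨v, hv, rfl⟩ := hle hd
  exact ⟨⟨v, hv⟩, rfl⟩

lemma IsUnimodular.exists_sol_triple [IsAlgClosed K] [NeZero (2 : K)] [FiniteDimensional K L]
    (hL : IsUnimodular K L) (h3 : finrank K L = 3) (hD : finrank K (derivedSeries K L 1) = 2) :
    ∃ e₁ e₂ e₃ : L, LinearIndependent K ![e₁, e₂, e₃] ∧
      ⁅e₁, e₂⁆ = e₂ ∧ ⁅e₁, e₃⁆ = -e₃ ∧ ⁅e₂, e₃⁆ = 0 := by
  set D := derivedSeries K L 1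
  have : IsLieAbelian D := hL.derivedSeries_one.isLieAbelian_of_finrank_eq_two hD
  have hD' : finrank K D.toSubmodule = 2 := hD
  obtain ⟨x, -, hx⟩ := SetLike.exists_of_lt
    (Submodule.lt_top_of_finrank_lt_finrank (s := D.toSubmodule) (by omega))
  have hsup : D.toSubmodule ⊔ Submodule.span K {x} = ⊤ :=
    (Submodule.sup_span_singleton_eq_top_iff hx).mpr
      (by have := D.toSubmodule.finrank_quotient_add_finrank; omega)
  obtain ⟨μ, hμ, v, w, hv, hw, hvw⟩ := Module.End.exists_hasEigenvector_neg_of_trace_eq_zero hD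
    (hL.trace_toEnd_derivedSeries_one x)
    (LinearMap.injective_iff_surjective.mpr (toEnd_derivedSeries_one_surjective hsup))
  have hxv : ⁅x, (v : L)⁆ = μ • (v : L) := congr_arg Subtype.val hv.apply_eq_smul
  have hxw : ⁅x, (w : L)⁆ = -μ • (w : L) := congr_arg Subtype.val hw.apply_eq_smul
  refine ⟨μ⁻¹ • x, v, w, linearIndependent_finCons.mpr ⟨?_, fun hmem ↦ hx ?_⟩,
    by simp [smul_lie, hxv, hμ], by simp [smul_lie, hxw, hμ],
    by simpa using congr_arg Subtype.val (trivial_lie_zero D D v w)⟩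
  · have := hvw.map' D.toSubmodule.subtype D.toSubmodule.ker_subtype
    rw [← FinVec.map_eq] at this
    exact this
  · refine (D.toSubmodule.smul_mem_iff (inv_ne_zero hμ)).mp (Submodule.span_le.mpr ?_ hmem)
    exact Set.range_subset_iff.mpr (Fin.forall_fin_two.mpr ⟨v.2, w.2⟩)

end LieAlgebra

/-- Every 3-dimensional complex solvable unimodular Lie algebra is isomorphic to
`ℂ³` (abelian), to the Heisenberg algebra `heis` (`[e₁,e₂] = e₃`, other brackets
zero), or to `sol` (`[e₁,e₂] = e₂`, `[e₁,e₃] = −e₃`, `[e₂,e₃] = 0`): there is a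
basis realizing one of the three sets of bracket relations. -/
theorem classification_solvable_unimodular_dim3 {L : Type*} [LieRing L]
    [LieAlgebra ℂ L] [FiniteDimensional ℂ L]
    (hdim : Module.finrank ℂ L = 3)
    (hsolv : LieAlgebra.IsSolvable L)
    (hunimod : ∀ x : L, LinearMap.trace ℂ L (LieAlgebra.ad ℂ L x) = 0) :
    ∃ b : Module.Basis (Fin 3) ℂ L,
      (⁅b 0, b 1⁆ = 0 ∧ ⁅b 0, b 2⁆ = 0 ∧ ⁅b 1, b 2⁆ = 0) ∨
      (⁅b 0, b 1⁆ = b 2 ∧ ⁅b 0, b 2⁆ = 0 ∧ ⁅b 1, b 2⁆ = 0) ∨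
      (⁅b 0, b 1⁆ = b 1 ∧ ⁅b 0, b 2⁆ = -b 2 ∧ ⁅b 1, b 2⁆ = 0) := by
  have : IsSolvable L := hsolv
  have : Nontrivial L := Module.nontrivial_of_finrank_eq_succ hdim
  have hL : IsUnimodular ℂ L := hunimod
  have hcard : Fintype.card (Fin 3) = finrank ℂ L := by simp [hdim]
  have hD : finrank ℂ (derivedSeries ℂ L 1) < 3 := hdim ▸
    Submodule.finrank_lt (s := (derivedSeries ℂ L 1).toSubmodule)
      (by simpa using (derivedSeries_lt_top_of_solvable ℂ L).ne)
  interval_cases h : finrank ℂ (derivedSeries ℂ L 1)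
  · have hab := finrank_derivedSeries_one_eq_zero_iff.mp h
    exact ⟨finBasisOfFinrankEq ℂ L hdim, Or.inl ⟨hab _ _, hab _ _, hab _ _⟩⟩
  · obtain ⟨e₁, e₂, z, hli, hrel⟩ := hL.exists_heisenberg_triple h
    exact ⟨basisOfLinearIndependentOfCardEqFinrank hli hcard, Or.inr (Or.inl (by simpa using hrel))⟩
  · obtain ⟨e₁, e₂, e₃, hli, hrel⟩ := hL.exists_sol_triple hdim h
    exact ⟨basisOfLinearIndependentOfCardEqFinrank hli hcard, Or.inr (Or.inr (by simpa using hrel))⟩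
end
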